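/- Let 𝔉 be a union-closed family of subsets of X = {a₁,…,aₙ}, let S ⊆ 𝔉 be an antichain, and let ℱ = φ_w(𝔉) for w = a₁a₂…aₙ. Then Σ_{f ∈ 𝔉[S]} |f| ≥ (n/2)·|𝔉[S]| + (1/2)·Σ_{a∈X} ( |π_w(a) ∩ S↑| − |σ_w(a) ∩ S↑| ), with equality when S = min(𝔉). -/

import Mathlib

open Finset

variable {α : Type*} [DecidableEq α]

/-- A family is union-closed if it is closed under pairwise unions. -/
def UnionClosed (F : Finset (Finset α)) : Prop := ∀ f ∈ F, ∀ g ∈ F, f ∪ g ∈ F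

/-- One rising step: φ_{S,a}(z) = z ∪ {a} if z ∪ {a} ∉ S, and z otherwise. -/
def riseStep (S : Finset (Finset α)) (a : α) (z : Finset α) : Finset α :=
  if insert a z ∈ S then z else insert a z

/-- Iterated rising function along a word (list of letters): at each step the
current family is replaced by its image and the next letter is risen. -/
def riseWord (S : Finset (Finset α)) : List α → Finset α → Finset α
  | [], z => z
  | a :: u, z => riseWord (S.image (riseStep S a)) u (riseStep S a z)

/-- The section of a family along (a prefix of) a word. -/
def riseSections (S : Finset (Finset α)) : List α → Finset (Finset α)
  | [] => S
  | a :: u => riseSections (S.image (riseStep S a)) u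

/-- The spurious elements σ_w(𝔉,a): the elements η ∈ ℱ = φ_w(𝔉) with
a ∈ η \ φ_w⁻¹(η), i.e. η = φ_w(f) with f ∈ 𝔉, a ∉ f, a ∈ η. -/
def spurious (F : Finset (Finset α)) (w : List α) (a : α) : Finset (Finset α) :=
  ((F.filter fun f => a ∉ f).image (riseWord F w)).filter fun η => a ∈ η

/-- The pure elements π_w(𝔉,a): the elements η ∈ φ_w(𝔉_a) with η \ {a} ∉ ℱ. -/
def pureF (F : Finset (Finset α)) (w : List α) (a : α) : Finset (Finset α) :=
  ((F.filter fun f => a ∈ f).image (riseWord F w)).filter fun η =>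
    η.erase a ∉ F.image (riseWord F w)

/-- The set of minimal elements of a family (under inclusion). -/
def minsF (F : Finset (Finset α)) : Finset (Finset α) :=
  F.filter fun h => ∀ g ∈ F, g ⊆ h → g = h

/-- The principal ideal 𝔉[S] = { f ∈ 𝔉 : ∃ z ∈ S, z ⊆ f }. -/
def idealF (F S : Finset (Finset α)) : Finset (Finset α) :=
  F.filter fun f => ∃ z ∈ S, z ⊆ f

/-- The intersection T ∩ S↑ of a family T with the up-closure of S. -/
def upFilter (S T : Finset (Finset α)) : Finset (Finset α) :=
  T.filter fun t => ∃ z ∈ S, z ⊆ t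

/-!
Write `Φ = φ_w` and `ℱ = Φ(𝔉)`. For a union-closed `𝔉`, `Φ` reflects inclusion on `𝔉`
(`z ⊆ Φ f ↔ z ⊆ f`, since a member of the family strictly between `f` and `f ∪ z` survives every
rising step). Hence `Φ` is injective on `𝔉`, maps `𝔉[S]` onto `ℱ ∩ S↑`, and `Φ f \ {a} ∉ ℱ`
whenever `a ∈ Φ f \ f`. Moreover `ℱ` is closed under adding any letter `a` of `w`.

Splitting `𝔉[S]` according to `a ∈ f`, `a ∈ Φ f` and `Φ f \ {a} ∈ ℱ`, the contribution of the
letter `a` reduces to `#{η ∈ ℱ ∩ S↑ | a ∉ η} ≤ #{η ∈ ℱ ∩ S↑ | a ∈ η, η \ {a} ∈ ℱ}`, witnessed by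
`η ↦ η ∪ {a}`. When `S = min 𝔉` we have `ℱ ∩ S↑ = ℱ`, and `η ↦ η \ {a}` inverts this map.
Summing over `a` and using `∑_f |f| = ∑_a #{f | a ∈ f}` gives the claim.
-/

def InsertClosed (a : α) (H : Finset (Finset α)) : Prop := ∀ ξ ∈ H, insert a ξ ∈ H

section RiseStep

variable {H : Finset (Finset α)} {a : α} {z : Finset α}

lemma riseStep_of_mem (h : insert a z ∈ H) : riseStep H a z = z := if_pos h

lemma riseStep_of_notMem (h : insert a z ∉ H) : riseStep H a z = insert a z := if_neg h

lemma insert_riseStep : insert a (riseStep H a z) = insert a z := by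
  unfold riseStep; split_ifs <;> simp

lemma subset_riseStep : z ⊆ riseStep H a z := by
  unfold riseStep; split_ifs
  exacts [subset_rfl, subset_insert a z]

lemma riseStep_subset : riseStep H a z ⊆ insert a z :=
  insert_riseStep (H := H) ▸ subset_insert a _

lemma insert_mem_of_notMem_riseStep (h : a ∉ riseStep H a z) : insert a z ∈ H := by
  by_contra h'
  exact h (riseStep_of_notMem h' ▸ mem_insert_self a z)

lemma mem_image_riseStep (hz : z ∈ H) (h : insert a z ∈ H) : z ∈ H.image (riseStep H a) :=
  mem_image.2 ⟨z, hz, riseStep_of_mem h⟩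

lemma insert_mem_image_riseStep (hz : z ∈ H) : insert a z ∈ H.image (riseStep H a) := by
  by_cases h : insert a z ∈ H
  · exact mem_image_riseStep h (by rwa [insert_idem])
  · exact mem_image.2 ⟨z, hz, riseStep_of_notMem h⟩

lemma UnionClosed.image_riseStep (hH : UnionClosed H) (a : α) :
    UnionClosed (H.image (riseStep H a)) := by
  simp only [UnionClosed, forall_mem_image]
  intro f hf g hg
  by_cases ha : a ∈ riseStep H a f ∪ riseStep H a g
  · have : riseStep H a f ∪ riseStep H a g = insert a (f ∪ g) := by
      refine subset_antisymm ?_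
        (insert_subset ha (union_subset_union subset_riseStep subset_riseStep))
      rw [insert_union_distrib]
      exact union_subset_union riseStep_subset riseStep_subset
    rw [this]
    exact insert_mem_image_riseStep (hH f hf g hg)
  · rw [mem_union, not_or] at ha
    have hfa := insert_mem_of_notMem_riseStep ha.1
    have hga := insert_mem_of_notMem_riseStep ha.2
    rw [riseStep_of_mem hfa, riseStep_of_mem hga]
    exact mem_image_riseStep (hH f hf g hg) (insert_union_distrib a f g ▸ hH _ hfa _ hga)

lemma insertClosed_image_riseStep_self : InsertClosed a (H.image (riseStep H a)) := by
  simp only [InsertClosed, forall_mem_image, insert_riseStep]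
  exact fun z hz => insert_mem_image_riseStep hz

lemma InsertClosed.image_riseStep (h : InsertClosed a H) (c : α) :
    InsertClosed a (H.image (riseStep H c)) := by
  simp only [InsertClosed, forall_mem_image]
  intro z hz
  by_cases hc : insert c z ∈ H
  · rw [riseStep_of_mem hc]
    exact mem_image_riseStep (h z hz) (insert_comm a c z ▸ h _ hc)
  · rw [riseStep_of_notMem hc, insert_comm]
    exact insert_mem_image_riseStep (h z hz)

end RiseStep

section RiseWord

lemma subset_riseWord : ∀ (H : Finset (Finset α)) (u : List α) (z : Finset α),
    z ⊆ riseWord H u z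
  | _, [], _ => subset_rfl
  | _, _ :: u, _ => subset_riseStep.trans (subset_riseWord _ u _)

lemma riseSections_eq_image : ∀ (H : Finset (Finset α)) (u : List α),
    riseSections H u = H.image (riseWord H u)
  | H, [] => image_id.symm
  | H, a :: u => by
    rw [riseSections, riseSections_eq_image, image_image]
    rfl

lemma InsertClosed.riseSections {a : α} : ∀ {H : Finset (Finset α)} (u : List α),
    InsertClosed a H → InsertClosed a (riseSections H u)
  | _, [], h => h
  | _, c :: u, h => InsertClosed.riseSections u (h.image_riseStep c)

lemma insertClosed_riseSections {a : α} : ∀ (H : Finset (Finset α)) {u : List α},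
    a ∈ u → InsertClosed a (riseSections H u)
  | H, c :: u, ha => by
    rw [riseSections]
    rcases List.mem_cons.1 ha with rfl | ha
    · exact insertClosed_image_riseStep_self.riseSections u
    · exact insertClosed_riseSections (H.image (riseStep H c)) ha

-- `∃ s ∈ H, t ⊂ s ⊆ t ∪ z` is the invariant that survives each rising step.
lemma not_subset_riseWord_of_ssubset {z : Finset α} : ∀ {H : Finset (Finset α)} (u : List α)
    {t s : Finset α}, UnionClosed H → s ∈ H → t ⊂ s → s ⊆ t ∪ z → ¬ z ⊆ riseWord H u t
  | _, [], _, _, _, _, hts, hsz => fun hzt =>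
    hts.2 (hsz.trans (union_subset subset_rfl hzt))
  | H, c :: u, t, s, hH, hs, hts, hsz => by
    change ¬ z ⊆ riseWord (H.image (riseStep H c)) u (riseStep H c t)
    by_cases hc : insert c t ∈ H
    · have hcs : insert c s ∈ H := by
        rw [← union_eq_left.2 hts.subset, ← union_insert]
        exact hH _ hs _ hc
      rw [riseStep_of_mem hc]
      exact not_subset_riseWord_of_ssubset u (hH.image_riseStep c)
        (mem_image_riseStep hs hcs) hts hsz
    · rw [riseStep_of_notMem hc]
      refine not_subset_riseWord_of_ssubset u (hH.image_riseStep c)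
        (insert_mem_image_riseStep hs) ?_ (insert_union c t z ▸ insert_subset_insert c hsz)
      by_cases hcs : c ∈ s
      · rw [insert_eq_of_mem hcs]
        exact (insert_subset hcs hts.subset).ssubset_of_ne fun h => hc (h ▸ hs)
      · obtain ⟨x, hxs, hxt⟩ := exists_of_ssubset hts
        refine (ssubset_iff_of_subset (insert_subset_insert c hts.subset)).2
          ⟨x, mem_insert_of_mem hxs, ?_⟩
        rw [mem_insert, not_or]
        exact ⟨fun h => hcs (h ▸ hxs), hxt⟩

variable {F : Finset (Finset α)} {w : List α}

lemma subset_riseWord_iff (hF : UnionClosed F) {z f : Finset α} (hz : z ∈ F) (hf : f ∈ F) :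
    z ⊆ riseWord F w f ↔ z ⊆ f := by
  refine ⟨fun h => ?_, fun h => h.trans (subset_riseWord F w f)⟩
  by_contra hzf
  exact not_subset_riseWord_of_ssubset w hF (hF f hf z hz)
    (left_lt_sup.2 hzf) subset_rfl h

lemma riseWord_injOn (hF : UnionClosed F) : Set.InjOn (riseWord F w) F := fun f hf g hg h =>
  subset_antisymm ((subset_riseWord_iff hF hf hg).1 (h ▸ subset_riseWord F w f))
    ((subset_riseWord_iff hF hg hf).1 (h ▸ subset_riseWord F w g))

lemma erase_riseWord_notMem_image (hF : UnionClosed F) {f : Finset α} {a : α} (hf : f ∈ F)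
    (haf : a ∉ f) (ha : a ∈ riseWord F w f) :
    (riseWord F w f).erase a ∉ F.image (riseWord F w) := by
  intro hmem
  obtain ⟨g, hg, hgf⟩ := mem_image.1 hmem
  have hgf' : g ⊆ f := (subset_riseWord_iff hF hg hf).1
    ((subset_riseWord F w g).trans (hgf ▸ erase_subset a _))
  have hfg : f ⊆ g := (subset_riseWord_iff hF hf hg).1
    (hgf ▸ subset_erase.2 ⟨subset_riseWord F w f, haf⟩)
  rw [subset_antisymm hgf' hfg] at hgf
  exact notMem_erase a _ (hgf ▸ ha)

end RiseWord

section Counting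

lemma card_filter_notMem_le {a : α} {𝒢 ℱ : Finset (Finset α)} (h𝒢 : 𝒢 ⊆ ℱ)
    (hℱ : InsertClosed a ℱ) (hup : ∀ η ∈ 𝒢, ∀ ζ ∈ ℱ, η ⊆ ζ → ζ ∈ 𝒢) :
    #{η ∈ 𝒢 | a ∉ η} ≤ #{η ∈ 𝒢 | a ∈ η ∧ η.erase a ∈ ℱ} := by
  refine card_le_card_of_injOn (insert a) (fun η hη => ?_) fun η₁ h₁ η₂ h₂ h => ?_
  · simp only [mem_coe, mem_filter] at hη ⊢
    exact ⟨hup η hη.1 _ (hℱ η (h𝒢 hη.1)) (subset_insert a η), mem_insert_self a η,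
      (erase_insert hη.2).symm ▸ h𝒢 hη.1⟩
  · simp only [mem_coe, mem_filter] at h₁ h₂
    rw [← erase_insert h₁.2, ← erase_insert h₂.2, h]

lemma card_filter_notMem_eq {a : α} {ℱ : Finset (Finset α)} (hℱ : InsertClosed a ℱ) :
    #{η ∈ ℱ | a ∉ η} = #{η ∈ ℱ | a ∈ η ∧ η.erase a ∈ ℱ} := by
  refine card_nbij' (insert a) (erase · a) (fun η hη => ?_) (fun η hη => ?_)
    (fun η hη => ?_) (fun η hη => ?_) <;> simp only [mem_coe, mem_filter] at hη ⊢
  · exact ⟨hℱ η hη.1, mem_insert_self a η, (erase_insert hη.2).symm ▸ hη.1⟩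
  · exact ⟨hη.2.2, notMem_erase a η⟩
  · exact erase_insert hη.2
  · exact insert_erase hη.2.1

lemma sum_card_eq_sum_card_filter_mem [Fintype α] (B : Finset (Finset α)) :
    ∑ s ∈ B, #s = ∑ a, #{s ∈ B | a ∈ s} := by
  simp only [card_eq_sum_ones, sum_filter]
  rw [sum_comm]
  simp

variable {F S : Finset (Finset α)} {w : List α} {a : α}

lemma idealF_minsF : idealF F (minsF F) = F := by
  refine filter_true_of_mem fun f hf => ?_
  obtain ⟨z, hzf, hz⟩ := exists_minimal_le_of_wellFoundedLT (· ∈ F) f hf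
  exact ⟨z, mem_filter.2 ⟨hz.1, fun g hg hgz => hz.eq_of_le hg hgz⟩, hzf⟩

lemma exists_subset_riseWord_iff (hF : UnionClosed F) (hS : S ⊆ F) {f : Finset α}
    (hf : f ∈ F) : (∃ z ∈ S, z ⊆ riseWord F w f) ↔ ∃ z ∈ S, z ⊆ f :=
  exists_congr fun _ => and_congr_right fun hz => subset_riseWord_iff hF (hS hz) hf

lemma image_riseWord_idealF (hF : UnionClosed F) (hS : S ⊆ F) :
    (idealF F S).image (riseWord F w) = upFilter S (F.image (riseWord F w)) := by
  rw [upFilter, filter_image, idealF]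
  exact congrArg _ (filter_congr fun f hf => (exists_subset_riseWord_iff hF hS hf).symm)

lemma card_filter_riseWord (hF : UnionClosed F) {s : Finset (Finset α)} (hs : s ⊆ F)
    (p : Finset α → Prop) [DecidablePred p] :
    #{f ∈ s | p (riseWord F w f)} = #{η ∈ s.image (riseWord F w) | p η} := by
  rw [filter_image, card_image_of_injOn]
  exact (riseWord_injOn hF).mono (coe_subset.2 ((filter_subset _ _).trans hs))

lemma card_upFilter_image_riseWord (hF : UnionClosed F) (hS : S ⊆ F)
    (p q : Finset α → Prop) [DecidablePred p] [DecidablePred q] :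
    #(upFilter S ({η ∈ (F.filter p).image (riseWord F w) | q η})) =
      #{f ∈ idealF F S | p f ∧ q (riseWord F w f)} := by
  rw [upFilter, filter_image, filter_image, card_image_of_injOn]
  · congr 1
    ext f
    simp only [idealF, mem_filter]
    constructor
    · rintro ⟨⟨⟨hf, hp⟩, hq⟩, hup⟩
      exact ⟨⟨hf, (exists_subset_riseWord_iff hF hS hf).1 hup⟩, hp, hq⟩
    · rintro ⟨⟨hf, hup⟩, hp, hq⟩
      exact ⟨⟨⟨hf, hp⟩, hq⟩, (exists_subset_riseWord_iff hF hS hf).2 hup⟩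
  · exact (riseWord_injOn hF).mono (coe_subset.2
      ((filter_subset _ _).trans ((filter_subset _ _).trans (filter_subset _ _))))


lemma filter_mem_and_erase_riseWord_mem (hF : UnionClosed F) {s : Finset (Finset α)}
    (hs : s ⊆ F) :
    {f ∈ s | a ∈ f ∧ (riseWord F w f).erase a ∈ F.image (riseWord F w)} =
      {f ∈ s | a ∈ riseWord F w f ∧ (riseWord F w f).erase a ∈ F.image (riseWord F w)} :=
  filter_congr fun f hf => ⟨fun h => ⟨subset_riseWord F w f h.1, h.2⟩, fun h =>
    ⟨by_contra fun haf => erase_riseWord_notMem_image hF (hs hf) haf h.1 h.2, h.2⟩⟩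

lemma card_filter_notMem_riseWord_le (hF : UnionClosed F) (hS : S ⊆ F) (ha : a ∈ w) :
    #{f ∈ idealF F S | a ∉ riseWord F w f} ≤
      #{f ∈ idealF F S | a ∈ f ∧ (riseWord F w f).erase a ∈ F.image (riseWord F w)} := by
  have hI : idealF F S ⊆ F := filter_subset _ _
  rw [filter_mem_and_erase_riseWord_mem hF hI, card_filter_riseWord hF hI (a ∉ ·),
    card_filter_riseWord hF hI (fun η => a ∈ η ∧ η.erase a ∈ F.image (riseWord F w)),
    image_riseWord_idealF hF hS]
  refine card_filter_notMem_le (filter_subset _ _)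
    (riseSections_eq_image F w ▸ insertClosed_riseSections F ha) ?_
  simp only [upFilter, mem_filter]
  exact fun η ⟨_, z, hz, hzη⟩ ζ hζ hηζ => ⟨hζ, z, hz, hzη.trans hηζ⟩

lemma card_filter_notMem_riseWord_eq (hF : UnionClosed F) (ha : a ∈ w) :
    #{f ∈ F | a ∉ riseWord F w f} =
      #{f ∈ F | a ∈ f ∧ (riseWord F w f).erase a ∈ F.image (riseWord F w)} := by
  rw [filter_mem_and_erase_riseWord_mem hF subset_rfl, card_filter_riseWord hF subset_rfl (a ∉ ·),
    card_filter_riseWord hF subset_rfl (fun η => a ∈ η ∧ η.erase a ∈ F.image (riseWord F w))]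
  exact card_filter_notMem_eq (riseSections_eq_image F w ▸ insertClosed_riseSections F ha)

lemma card_idealF_add_card_pureF_add (hF : UnionClosed F) (hS : S ⊆ F) (a : α) :
    #(idealF F S) + #(upFilter S (pureF F w a)) +
        #{f ∈ idealF F S | a ∈ f ∧ (riseWord F w f).erase a ∈ F.image (riseWord F w)} =
      2 * #{f ∈ idealF F S | a ∈ f} + #(upFilter S (spurious F w a)) +
        #{f ∈ idealF F S | a ∉ riseWord F w f} := by
  rw [pureF, spurious, card_upFilter_image_riseWord hF hS, card_upFilter_image_riseWord hF hS]
  have hI := card_filter_add_card_filter_not (s := idealF F S) (a ∈ ·)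
  have hmem := card_filter_add_card_filter_not (s := {f ∈ idealF F S | a ∈ f})
    (fun f => (riseWord F w f).erase a ∈ F.image (riseWord F w))
  have hnotMem := card_filter_add_card_filter_not (s := {f ∈ idealF F S | a ∉ f})
    (a ∈ riseWord F w ·)
  have hrise : {f ∈ idealF F S | a ∉ f ∧ a ∉ riseWord F w f} =
      {f ∈ idealF F S | a ∉ riseWord F w f} :=
    filter_congr fun f _ => and_iff_right_of_imp fun h hf => h (subset_riseWord F w f hf)
  simp only [filter_filter, hrise] at hmem hnotMem
  omega

lemma half_card_idealF_add_le (hF : UnionClosed F) (hS : S ⊆ F) (ha : a ∈ w) :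
    (#(idealF F S) : ℝ) / 2 + 1 / 2 *
        ((#(upFilter S (pureF F w a)) : ℝ) - #(upFilter S (spurious F w a))) ≤
      #{f ∈ idealF F S | a ∈ f} := by
  have h := congrArg (Nat.cast : ℕ → ℝ) (card_idealF_add_card_pureF_add hF hS a (w := w))
  have hle : (#{f ∈ idealF F S | a ∉ riseWord F w f} : ℝ) ≤
      #{f ∈ idealF F S | a ∈ f ∧ (riseWord F w f).erase a ∈ F.image (riseWord F w)} := by
    exact_mod_cast card_filter_notMem_riseWord_le hF hS ha
  push_cast at h
  linarith

lemma half_card_idealF_minsF_add_eq (hF : UnionClosed F) (ha : a ∈ w) :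
    (#(idealF F (minsF F)) : ℝ) / 2 + 1 / 2 *
        ((#(upFilter (minsF F) (pureF F w a)) : ℝ) - #(upFilter (minsF F) (spurious F w a))) =
      #{f ∈ idealF F (minsF F) | a ∈ f} := by
  have h := congrArg (Nat.cast : ℕ → ℝ)
    (card_idealF_add_card_pureF_add (S := minsF F) hF (filter_subset _ F) a (w := w))
  have heq : (#{f ∈ idealF F (minsF F) | a ∉ riseWord F w f} : ℝ) =
      #{f ∈ idealF F (minsF F) | a ∈ f ∧
        (riseWord F w f).erase a ∈ F.image (riseWord F w)} := by
    rw [idealF_minsF]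
    exact_mod_cast card_filter_notMem_riseWord_eq hF ha
  push_cast at h
  linarith

end Counting

theorem stmt_15_general {α : Type*} [DecidableEq α] [Fintype α]
    (F : Finset (Finset α)) (hF : UnionClosed F)
    (w : List α) (hall : ∀ x : α, x ∈ w)
    (S : Finset (Finset α)) (hS : S ⊆ F) :
    (∑ f ∈ idealF F S, (f.card : ℝ)) ≥
      (Fintype.card α : ℝ) / 2 * (idealF F S).card +
      (1 / 2) * ∑ a : α,
        (((upFilter S (pureF F w a)).card : ℝ) - ((upFilter S (spurious F w a)).card : ℝ)) ∧
    (S = minsF F →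
      (∑ f ∈ idealF F S, (f.card : ℝ)) =
        (Fintype.card α : ℝ) / 2 * (idealF F S).card +
        (1 / 2) * ∑ a : α,
          (((upFilter S (pureF F w a)).card : ℝ) - ((upFilter S (spurious F w a)).card : ℝ))) := by
  have hlhs : ∑ f ∈ idealF F S, (f.card : ℝ) = ∑ a, (#{f ∈ idealF F S | a ∈ f} : ℝ) := by
    exact_mod_cast sum_card_eq_sum_card_filter_mem (idealF F S)
  have hrhs (x : ℝ) (g : α → ℝ) :
      (Fintype.card α : ℝ) / 2 * x + 1 / 2 * ∑ a, g a = ∑ a, (x / 2 + 1 / 2 * g a) := by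
    rw [sum_add_distrib, ← mul_sum, sum_const, card_univ, nsmul_eq_mul]
    ring
  rw [hlhs, hrhs]
  refine ⟨sum_le_sum fun a _ => half_card_idealF_add_le hF hS (hall a), ?_⟩
  rintro rfl
  exact sum_congr rfl fun a _ => (half_card_idealF_minsF_add_eq hF (hall a)).symm

/-- Proposition 5.8: for an antichain S ⊆ 𝔉,
Σ_{f ∈ 𝔉[S]} |f| ≥ (n/2)|𝔉[S]| + (1/2)Σ_{a∈X}(|π_w(a) ∩ S↑| − |σ_w(a) ∩ S↑|),
with equality when S = min(𝔉). -/
theorem stmt_15 {α : Type*} [DecidableEq α] [Fintype α]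
    (F : Finset (Finset α)) (hF : UnionClosed F)
    (hcov : ∀ x : α, ∃ f ∈ F, x ∈ f)
    (w : List α) (hnd : w.Nodup) (hall : ∀ x : α, x ∈ w)
    (S : Finset (Finset α)) (hS : S ⊆ F) (hSne : S.Nonempty)
    (hanti : ∀ f ∈ S, ∀ g ∈ S, f ⊆ g → f = g) :
    (∑ f ∈ idealF F S, (f.card : ℝ)) ≥
      (Fintype.card α : ℝ) / 2 * (idealF F S).card +
      (1 / 2) * ∑ a : α,
        (((upFilter S (pureF F w a)).card : ℝ) - ((upFilter S (spurious F w a)).card : ℝ)) ∧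
    (S = minsF F →
      (∑ f ∈ idealF F S, (f.card : ℝ)) =
        (Fintype.card α : ℝ) / 2 * (idealF F S).card +
        (1 / 2) * ∑ a : α,
          (((upFilter S (pureF F w a)).card : ℝ) - ((upFilter S (spurious F w a)).card : ℝ))) :=
  stmt_15_general F hF w hall S hS
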